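/- arXiv:1905.08842 — 4 statements merged into one kernel-verified Lean document; each statement's English description precedes it below -/
import Mathlib

section
/- If S is a finite relevance-connected set of propositional clauses with |S| = n, then for any two distinct clauses C and D in S there is an alternating path in S from C to D of length at most 2n − 2. -/
/-- A propositional literal: an atom together with a Boolean sign. -/
abbrev Lit (α : Type) := α × Bool

/-- A propositional clause: a finite set of literals. -/
abbrev Clause (α : Type) := Finset (α × Bool)

/-- The complement of a literal flips its sign. -/
def Lit.compl {α : Type} (L : Lit α) : Lit α := (L.1, !L.2)

/-- A valuation satisfies a literal `(a, s)` iff `v a = s`. -/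
def SatLit {α : Type} (v : α → Bool) (L : Lit α) : Prop := v L.1 = L.2

/-- A valuation satisfies a clause iff it satisfies some literal of it. -/
def SatClause {α : Type} (v : α → Bool) (C : Clause α) : Prop := ∃ L ∈ C, SatLit v L

/-- A valuation satisfies a set of clauses iff it satisfies every clause in it. -/
def SatSet {α : Type} (v : α → Bool) (S : Set (Clause α)) : Prop := ∀ C ∈ S, SatClause v C

/-- A set of clauses is satisfiable if some valuation satisfies it. -/
def Satisfiable {α : Type} (S : Set (Clause α)) : Prop := ∃ v, SatSet v S

/-- `IsAltPath S Cs ps` : the sequence of clauses `Cs` together with the list of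
linking literal pairs `ps` is an alternating path in `S`.  The path
`C₁,(L₁,M₂),C₂,…,(Lₙ₋₁,Mₙ),Cₙ` is encoded with `Cs = [C₁,…,Cₙ]` and
`ps = [(L₁,M₂),…,(Lₙ₋₁,Mₙ)]`. -/
def IsAltPath {α : Type} [DecidableEq α] (S : Set (Clause α))
    (Cs : List (Clause α)) (ps : List (Lit α × Lit α)) : Prop :=
  Cs ≠ [] ∧ ps.length + 1 = Cs.length ∧
  (∀ C ∈ Cs, C ∈ S) ∧
  (∀ i, ∀ h : i < ps.length,
    (ps.get ⟨i, h⟩).1 ∈ Cs.getD i ∅ ∧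
    (ps.get ⟨i, h⟩).2 ∈ Cs.getD (i + 1) ∅ ∧
    (ps.get ⟨i, h⟩).2 = Lit.compl (ps.get ⟨i, h⟩).1) ∧
  (∀ i, ∀ h : i + 1 < ps.length,
    (ps.get ⟨i + 1, h⟩).1 ≠ (ps.get ⟨i, Nat.lt_of_succ_lt h⟩).2)

/-- There is an alternating path in `S` from `C` to `D` of length `n`
(length counts the clauses). -/
def AltPathFromTo {α : Type} [DecidableEq α] (S : Set (Clause α))
    (C D : Clause α) (n : ℕ) : Prop :=
  ∃ Cs ps, IsAltPath S Cs ps ∧ Cs.head? = some C ∧ Cs.getLast? = some D ∧ Cs.length = n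

/-- The relevance distance `d_S(C, D)`: the minimum length of an alternating path
in `S` from `C` to `D`, or `∞` if there is none. -/
noncomputable def relDist {α : Type} [DecidableEq α] (S : Set (Clause α))
    (C D : Clause α) : ℕ∞ :=
  ⨅ n ∈ {n : ℕ | AltPathFromTo S C D n}, (n : ℕ∞)

/-- `d_S(T, C) = min {d_S(D, C) : D ∈ T}`. -/
noncomputable def relDistFrom {α : Type} [DecidableEq α] (S T : Set (Clause α))
    (C : Clause α) : ℕ∞ :=
  ⨅ D ∈ T, relDist S D C

/-- `R_{n,S}(T) = {C ∈ S : d_S(T, C) ≤ n}`. -/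
def RelSet {α : Type} [DecidableEq α] (n : ℕ) (S T : Set (Clause α)) : Set (Clause α) :=
  {C ∈ S | relDistFrom S T C ≤ (n : ℕ∞)}

/-- A set of clauses is relevance connected if between any two of its clauses
there is an alternating path in it. -/
def RelevanceConnected {α : Type} [DecidableEq α] (S : Set (Clause α)) : Prop :=
  ∀ C ∈ S, ∀ D ∈ S, ∃ n, AltPathFromTo S C D n

/-- A set of clauses is minimal unsatisfiable if it is unsatisfiable and every
proper subset of it is satisfiable. -/
def MinimalUnsat {α : Type} (S : Set (Clause α)) : Prop :=
  ¬ Satisfiable S ∧ ∀ T ⊂ S, Satisfiable T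

/-- `S'` is a support set for `S`: `S' ⊆ S` and every unsatisfiable subset of `S`
meets `S'`. -/
def IsSupport {α : Type} (S S' : Set (Clause α)) : Prop :=
  S' ⊆ S ∧ ∀ T ⊆ S, ¬ Satisfiable T → (T ∩ S').Nonempty

/-- `D` is a resolvent of `C₁` and `C₂` upon literal `L`. -/
def IsResolvent {α : Type} [DecidableEq α] (D C₁ C₂ : Clause α) (L : Lit α) : Prop :=
  L ∈ C₁ ∧ Lit.compl L ∈ C₂ ∧ D = (C₁.erase L) ∪ (C₂.erase (Lit.compl L))

/-- `Cs` is a resolution sequence from `S`: every clause is an input clause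
(member of `S`) or a resolvent of two earlier clauses. -/
def IsResolutionSeq {α : Type} [DecidableEq α] (S : Set (Clause α))
    (Cs : List (Clause α)) : Prop :=
  ∀ i, ∀ h : i < Cs.length,
    Cs.get ⟨i, h⟩ ∈ S ∨
    ∃ j k L, j < i ∧ k < i ∧ IsResolvent (Cs.get ⟨i, h⟩) (Cs.getD j ∅) (Cs.getD k ∅) L

/-- `Cs` is a resolution refutation of length `n` from `S`: a resolution sequence
of `n` clauses ending in the empty clause. -/
def IsRefutation {α : Type} [DecidableEq α] (S : Set (Clause α))
    (Cs : List (Clause α)) (n : ℕ) : Prop :=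
  IsResolutionSeq S Cs ∧ Cs.length = n ∧ Cs.getLast? = some (∅ : Clause α)

/-!
Take a shortest alternating path from `C` to `D`. If a clause occurs in it at positions
`i < j`, and the literal `Lⱼ` leaving the second occurrence differs from the literal `Mᵢ`
entering the first, cutting out the segment between them leaves a shorter alternating path;
hence in a shortest path `Lⱼ = Mᵢ`. In particular `C` occurs only at the start (it has no
entering literal), and `D` only at the end (otherwise truncate). A clause occurring three times,
at `i < j < k`, would give `Lⱼ = Mᵢ = Lₖ = Mⱼ`, contradicting `Lⱼ ≠ Mⱼ`. So the path has at
most `1 + 2 (n - 2) + 1 = 2n - 2` clauses.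
-/

theorem List.exists_eq_append_cons_of_cons_sublist {β : Type*} {a : β} {l l' : List β}
    (h : (a :: l).Sublist l') : ∃ r₁ r₂, l' = r₁ ++ a :: r₂ ∧ l.Sublist r₂ := by
  obtain ⟨r₁, r₂, rfl, ha, hl⟩ := List.cons_sublist_iff.mp h
  obtain ⟨s, t, rfl⟩ := List.mem_iff_append.mp ha
  exact ⟨s, t ++ r₂, by simp, hl.trans (List.sublist_append_right t r₂)⟩

theorem List.exists_eq_append_of_three_le_count_map {β γ : Type*} [DecidableEq γ] {f : β → γ}
    {l : List β} {x : γ} (h : 3 ≤ (l.map f).count x) :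
    ∃ l₁ a l₂ b l₃ c l₄, l = l₁ ++ a :: (l₂ ++ b :: (l₃ ++ c :: l₄)) ∧
      f a = x ∧ f b = x ∧ f c = x := by
  obtain ⟨l', hl', hx⟩ := List.sublist_map_iff.mp (List.replicate_sublist_iff.mpr h)
  rcases l' with _ | ⟨a, _ | ⟨b, _ | ⟨c, _ | ⟨d, l'⟩⟩⟩⟩ <;> simp [List.replicate] at hx
  obtain ⟨l₁, r, rfl, hbc⟩ := List.exists_eq_append_cons_of_cons_sublist hl'
  obtain ⟨l₂, r, rfl, hc⟩ := List.exists_eq_append_cons_of_cons_sublist hbc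
  obtain ⟨l₃, l₄, rfl, -⟩ := List.exists_eq_append_cons_of_cons_sublist hc
  exact ⟨l₁, a, l₂, b, l₃, c, l₄, rfl, hx.1.symm, hx.2.1.symm, hx.2.2.symm⟩

theorem List.length_le_card_mul_of_count_le {β : Type*} [DecidableEq β] {l : List β}
    {s : Finset β} {k : ℕ} (hs : ∀ x ∈ l, x ∈ s) (hk : ∀ x ∈ s, l.count x ≤ k) :
    l.length ≤ s.card * k := by
  have hsum := Multiset.sum_count_eq_card (s := s) (m := (l : Multiset β)) hs
  simp only [Multiset.coe_count, Multiset.coe_card] at hsum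
  simpa [← hsum] using Finset.sum_le_card_nsmul s _ k hk

section AltWalk

variable {α : Type} {S : Set (Clause α)} {C E : Clause α}

def AltLink (p q : Clause α × Lit α) : Prop := p.2.compl ∈ q.1 ∧ q.2 ≠ p.2.compl

/-- `l = [(C₁, L₁), …, (Cₙ₋₁, Lₙ₋₁)]` encodes the alternating path
`C₁, (L₁, L̄₁), C₂, …, Cₙ₋₁, (Lₙ₋₁, L̄ₙ₋₁), E` with `n ≥ 2`: the linking literal `Mᵢ₊₁` is
always the complement `L̄ᵢ`, so it is not recorded. -/
structure IsAltWalk (S : Set (Clause α)) (C E : Clause α) (l : List (Clause α × Lit α)) :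
    Prop where
  head_eq : (l.map Prod.fst).head? = some C
  mem : ∀ p ∈ l, p.1 ∈ S ∧ p.2 ∈ p.1
  chain : l.IsChain AltLink
  getLast_compl_mem : ∀ p ∈ l.getLast?, p.2.compl ∈ E
  end_mem : E ∈ S

namespace IsAltWalk

theorem ne_nil {l : List (Clause α × Lit α)} (h : IsAltWalk S C E l) : l ≠ [] := by
  rintro rfl
  simpa using h.head_eq

theorem altLink_of_eq_append {l l₁ l₂ : List (Clause α × Lit α)} {q : Clause α × Lit α}
    (h : IsAltWalk S C E l) (hl : l = l₁ ++ q :: l₂) : ∀ r ∈ l₁.getLast?, AltLink r q :=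
  fun r hr => (List.isChain_append.mp (hl ▸ h.chain)).2.2 r hr q (by simp)

theorem shortcut {l₁ l₂ l₃ : List (Clause α × Lit α)} {p q : Clause α × Lit α}
    (h : IsAltWalk S C E (l₁ ++ p :: (l₂ ++ q :: l₃))) (hpq : p.1 = q.1)
    (hq : ∀ r ∈ l₁.getLast?, q.2 ≠ r.2.compl) :
    IsAltWalk S C E (l₁ ++ q :: l₃) := by
  have hjoin := h.altLink_of_eq_append rfl
  obtain ⟨hhead, hmem, hchain, hlast, hE⟩ := h
  refine ⟨?_, ?_, ?_, ?_, hE⟩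
  · cases l₁ <;> simp_all
  · intro r hr
    apply hmem
    simp only [List.mem_append, List.mem_cons] at hr ⊢
    tauto
  · refine List.isChain_append.mpr ⟨hchain.left_of_append, ?_, ?_⟩
    · have hp : (p :: l₂ ++ q :: l₃).IsChain AltLink := hchain.right_of_append
      exact hp.right_of_append
    · intro r hr q' hq'
      obtain rfl : q' = q := by simpa using hq'.symm
      exact ⟨hpq ▸ (hjoin r hr).1, hq r hr⟩
  · rwa [← List.cons_append, ← List.append_assoc, List.getLast?_append_cons,
      ← List.getLast?_append_cons l₁] at hlast

theorem truncate {l₁ l₂ : List (Clause α × Lit α)} {q : Clause α × Lit α}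
    (h : IsAltWalk S C E (l₁ ++ q :: l₂)) (hqE : q.1 = E) (hl₁ : l₁ ≠ []) :
    IsAltWalk S C E l₁ := by
  have hjoin := h.altLink_of_eq_append rfl
  obtain ⟨hhead, hmem, hchain, -, hE⟩ := h
  refine ⟨?_, fun r hr => hmem r (by simp [hr]), hchain.left_of_append,
    fun r hr => hqE ▸ (hjoin r hr).1, hE⟩
  obtain ⟨a, l, rfl⟩ := List.exists_cons_of_ne_nil hl₁
  simpa using hhead

end IsAltWalk

theorem IsAltWalk.altPathFromTo [DecidableEq α] {l : List (Clause α × Lit α)}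
    (h : IsAltWalk S C E l) :
    AltPathFromTo S C E (l.length + 1) := by
  obtain ⟨hhead, hmem, hchain, hlast, hE⟩ := h
  have hlink := List.isChain_iff_getElem.mp hchain
  refine ⟨l.map Prod.fst ++ [E], l.map fun p => (p.2, p.2.compl), ⟨by simp, by simp, ?_, ?_, ?_⟩,
    by simp [List.head?_append, hhead], by simp, by simp⟩
  · simp only [List.mem_append, List.mem_map, List.mem_singleton]
    rintro _ (⟨p, hp, rfl⟩ | rfl)
    exacts [(hmem p hp).1, hE]
  · intro i hi
    simp only [List.length_map] at hi
    simp only [List.get_eq_getElem, List.getElem_map, List.getD_eq_getElem?_getD,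
      List.getElem?_append, List.length_map, hi, if_true, List.getElem?_map,
      List.getElem?_eq_getElem hi, Option.map_some, Option.getD_some, and_true]
    refine ⟨(hmem _ (List.getElem_mem hi)).2, ?_⟩
    by_cases hi' : i + 1 < l.length
    · simpa [hi', List.getElem?_eq_getElem hi'] using (hlink i hi').1
    · have hlen : i + 1 = l.length := by omega
      simp only [hlen, lt_self_iff_false, if_false, Nat.sub_self, List.getElem?_singleton,
        if_true, Option.getD_some]
      exact hlast _ (by simp [List.getLast?_eq_getElem?, show l.length - 1 = i by omega])
  · intro i hi
    simpa using (hlink i (by simpa using hi)).2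

theorem AltPathFromTo.exists_isAltWalk [DecidableEq α] {m : ℕ} (h : AltPathFromTo S C E m)
    (hCE : C ≠ E) :
    ∃ l, IsAltWalk S C E l := by
  obtain ⟨Cs, ps, ⟨-, hlen, hmem, hlink, hdiff⟩, hhead, hlast, -⟩ := h
  have hps : ps ≠ [] := by
    rintro rfl
    obtain ⟨D, rfl⟩ := List.length_eq_one_iff.mp hlen.symm
    simp_all
  have hCs : ∀ i (hi : i < ps.length), Cs.getD i ∅ = Cs[i] := fun i hi => by
    simp [List.getD_eq_getElem?_getD, List.getElem?_eq_getElem (show i < Cs.length by omega)]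
  have hCs' : ∀ i (hi : i < ps.length), Cs.getD (i + 1) ∅ = Cs[i + 1] := fun i hi => by
    simp [List.getD_eq_getElem?_getD, List.getElem?_eq_getElem (show i + 1 < Cs.length by omega)]
  have hzlen : (Cs.zip (ps.map Prod.fst)).length = ps.length := by
    simp only [List.length_zip, List.length_map]; omega
  refine ⟨Cs.zip (ps.map Prod.fst), ⟨?_, ?_, ?_, ?_, hmem E (List.mem_of_mem_getLast? hlast)⟩⟩
  · obtain ⟨C₀, Cs, rfl⟩ := List.exists_cons_of_length_pos (show 0 < Cs.length by omega)
    obtain ⟨p₀, ps, rfl⟩ := List.exists_cons_of_ne_nil hps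
    simpa using hhead
  · refine List.forall_mem_iff_getElem.mpr fun i hi => ?_
    rw [hzlen] at hi
    simp only [List.getElem_zip, List.getElem_map]
    exact ⟨hmem _ (List.getElem_mem _), hCs i hi ▸ (hlink i hi).1⟩
  · refine List.isChain_iff_getElem.mpr fun i hi => ?_
    rw [hzlen] at hi
    simp only [List.getElem_zip, List.getElem_map]
    obtain ⟨-, hnext, hcompl⟩ := hlink i (by omega)
    exact ⟨hcompl ▸ hCs' i (by omega) ▸ hnext, hcompl ▸ hdiff i hi⟩
  · have hk : ps.length - 1 < ps.length := by have := List.length_pos_of_ne_nil hps; omega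
    have hE : Cs[ps.length - 1 + 1] = E := by
      rw [List.getLast?_eq_getElem?, List.getElem?_eq_getElem (by omega)] at hlast
      simpa [show ps.length - 1 + 1 = Cs.length - 1 by omega] using hlast
    intro p hp
    rw [List.getLast?_eq_getElem?, List.getElem?_eq_getElem (by omega)] at hp
    simp only [hzlen, List.getElem_zip, List.getElem_map, Option.mem_def,
      Option.some.injEq] at hp
    obtain ⟨-, hnext, hcompl⟩ := hlink _ hk
    rw [← hp, ← hE, ← hCs' _ hk]
    exact hcompl ▸ hnext

def IsShortestAltWalk (S : Set (Clause α)) (C E : Clause α) (l : List (Clause α × Lit α)) :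
    Prop :=
  MinimalFor (IsAltWalk S C E) List.length l

namespace IsShortestAltWalk

variable {l : List (Clause α × Lit α)}

theorem exit_eq_compl_of_fst_eq (h : IsShortestAltWalk S C E l)
    {l₁ l₂ l₃ : List (Clause α × Lit α)} {p q : Clause α × Lit α}
    (hl : l = l₁ ++ p :: (l₂ ++ q :: l₃)) (hpq : p.1 = q.1) :
    ∃ r ∈ l₁.getLast?, q.2 = r.2.compl := by
  by_contra! hq
  subst hl
  have hlen := h.2 (h.1.shortcut hpq hq)
    (by simp only [List.length_append, List.length_cons]; omega)
  simp only [List.length_append, List.length_cons] at hlen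
  omega

theorem fst_ne_of_mem_tail (h : IsShortestAltWalk S C E l) {q : Clause α × Lit α}
    (hq : q ∈ l.tail) : q.1 ≠ C := by
  intro hqC
  obtain ⟨p, l', rfl⟩ := List.exists_cons_of_ne_nil h.1.ne_nil
  obtain ⟨l₂, l₃, rfl⟩ := List.mem_iff_append.mp hq
  have hpC : p.1 = C := by simpa using h.1.head_eq
  obtain ⟨r, hr, -⟩ := h.exit_eq_compl_of_fst_eq (l₁ := []) rfl (hpC.trans hqC.symm)
  simp at hr

theorem fst_ne_end (h : IsShortestAltWalk S C E l) (hCE : C ≠ E) {q : Clause α × Lit α}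
    (hq : q ∈ l) : q.1 ≠ E := by
  intro hqE
  obtain ⟨l₁, l₂, rfl⟩ := List.mem_iff_append.mp hq
  obtain rfl | hl₁ := eq_or_ne l₁ []
  · exact hCE (by simpa [hqE] using h.1.head_eq.symm)
  · have hlen := h.2 (h.1.truncate hqE hl₁) (by simp)
    simp at hlen

theorem count_fst_le_two [DecidableEq α] (h : IsShortestAltWalk S C E l) (X : Clause α) :
    (l.map Prod.fst).count X ≤ 2 := by
  by_contra! h3
  obtain ⟨l₁, a, l₂, b, l₃, c, l₄, hl, ha, hb, hc⟩ :=
    List.exists_eq_append_of_three_le_count_map h3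
  obtain ⟨r, hr, hbr⟩ := h.exit_eq_compl_of_fst_eq hl (ha.trans hb.symm)
  obtain ⟨r', hr', hcr'⟩ := h.exit_eq_compl_of_fst_eq (l₁ := l₁) (l₂ := l₂ ++ b :: l₃)
    (l₃ := l₄) (by simp [hl]) (ha.trans hc.symm)
  obtain ⟨s, hs, hcs⟩ := h.exit_eq_compl_of_fst_eq (l₁ := l₁ ++ a :: l₂) (l₂ := l₃)
    (l₃ := l₄) (by simp [hl]) (hb.trans hc.symm)
  obtain rfl := Option.mem_unique hr hr'
  have hsb : AltLink s b := h.1.altLink_of_eq_append (l₂ := l₃ ++ c :: l₄) (by simp [hl]) s hs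
  exact hsb.2 (hbr.trans (hcr'.symm.trans hcs))

theorem length_add_one_le [DecidableEq α] {S : Finset (Clause α)}
    (h : IsShortestAltWalk (↑S) C E l) (hCE : C ≠ E) : l.length + 1 ≤ 2 * S.card - 2 := by
  obtain ⟨p, l', rfl⟩ := List.exists_cons_of_ne_nil h.1.ne_nil
  have hpC : p.1 = C := by simpa using h.1.head_eq
  have hC : C ∈ S := hpC ▸ (h.1.mem p (by simp)).1
  have hE : E ∈ S.erase C := Finset.mem_erase.mpr ⟨hCE.symm, h.1.end_mem⟩
  have hsub : ∀ x ∈ l'.map Prod.fst, x ∈ (S.erase C).erase E := by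
    simp only [List.mem_map, Finset.mem_erase]
    rintro _ ⟨q, hq, rfl⟩
    exact ⟨h.fst_ne_end hCE (by simp [hq]), h.fst_ne_of_mem_tail hq,
      (h.1.mem q (by simp [hq])).1⟩
  have hcount : ∀ x ∈ (S.erase C).erase E, (l'.map Prod.fst).count x ≤ 2 := fun x _ =>
    ((List.sublist_cons_self p.1 _).count_le x).trans (h.count_fst_le_two x)
  have hlen := List.length_le_card_mul_of_count_le hsub hcount
  rw [Finset.card_erase_of_mem hE, Finset.card_erase_of_mem hC, List.length_map] at hlen
  have hcard := Finset.card_pos.mpr ⟨E, hE⟩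
  rw [Finset.card_erase_of_mem hC] at hcard
  simp only [List.length_cons]
  omega

end IsShortestAltWalk

end AltWalk

/-- If `S` is a finite relevance-connected set of propositional clauses with
`|S| = n`, then any two distinct clauses of `S` are joined by an alternating
path in `S` of length at most `2n − 2`. -/
theorem stmt_0 {α : Type} [DecidableEq α] (S : Finset (Clause α)) (n : ℕ)
    (hn : S.card = n) (hconn : RelevanceConnected (↑S : Set (Clause α)))
    (C D : Clause α) (hC : C ∈ S) (hD : D ∈ S) (hne : C ≠ D) :
    ∃ m ≤ 2 * n - 2, AltPathFromTo (↑S : Set (Clause α)) C D m := by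
  obtain ⟨m, hm⟩ := hconn C hC D hD
  obtain ⟨l, hl⟩ := exists_minimalFor_of_wellFoundedLT (IsAltWalk (↑S) C D) List.length
    (hm.exists_isAltWalk hne)
  exact ⟨l.length + 1, hn ▸ IsShortestAltWalk.length_add_one_le hl hne, hl.1.altPathFromTo⟩
end

section
/- If there is an alternating path in a set S of propositional clauses from clause C to clause D, then there is an alternating path in S from C to D in which every clause of S occurs at most twice and in which the endpoint clauses C and D each occur exactly once. -/
/-!
Take a shortest alternating path from `C` to `D`. A later occurrence of `C`, or an earlier one
of `D`, would let us cut off a prefix or a suffix. If a clause occurs three times, at positions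
`a < b < c` (necessarily inner ones), then cutting out the loop between two of its occurrences
gives a shorter alternating path as long as the literal leaving the later occurrence differs from
the literal entering the earlier one. If the cuts `(a, b)` and `(a, c)` both fail, the literals
leaving `b` and `c` both equal the literal entering `a`; then the cut `(b, c)` succeeds, since the
literal leaving `b` differs from the literal entering `b`.
-/

theorem List.exists_strictMono_getElem?_eq_of_le_count {β : Type} [DecidableEq β]
    {l : List β} {x : β} {k : ℕ} (h : k ≤ l.count x) :
    ∃ f : Fin k → ℕ, StrictMono f ∧ ∀ t, l[f t]? = some x := by
  obtain ⟨f, hf⟩ := List.sublist_iff_exists_fin_orderEmbedding_get_eq.mp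
    (List.replicate_sublist_iff.mpr h)
  refine ⟨fun t => f (Fin.cast (by simp) t), fun s t hst => f.strictMono (by simpa using hst),
    fun t => ?_⟩
  simpa [List.getElem?_eq_getElem] using (hf (Fin.cast (by simp) t)).symm

namespace IsAltPath

variable {α : Type} [DecidableEq α] {S : Set (Clause α)} {Cs Cs₁ Cs₂ : List (Clause α)}
  {ps ps₁ ps₂ : List (Lit α × Lit α)}

theorem length_add_one (h : IsAltPath S Cs ps) : ps.length + 1 = Cs.length := h.2.1

theorem fst_ne_snd (h : IsAltPath S Cs ps) {i : ℕ} (hi : i + 1 < ps.length) :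
    (ps[i + 1]).1 ≠ (ps[i]).2 := h.2.2.2.2 i hi

theorem drop (h : IsAltPath S Cs ps) {j : ℕ} (hj : j < Cs.length) :
    IsAltPath S (Cs.drop j) (ps.drop j) := by
  obtain ⟨-, hlen, hmem, hlink, halt⟩ := h
  refine ⟨by simp only [ne_eq, List.drop_eq_nil_iff, not_le]; omega,
    by simp only [List.length_drop]; omega, fun C hC => hmem C (List.mem_of_mem_drop hC),
    fun i hi => ?_, fun i hi => ?_⟩
  · simpa [Nat.add_assoc] using hlink (j + i) (by simp only [List.length_drop] at hi; omega)
  · simpa [Nat.add_assoc] using halt (j + i) (by simp only [List.length_drop] at hi; omega)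

theorem take (h : IsAltPath S Cs ps) (i : ℕ) :
    IsAltPath S (Cs.take (i + 1)) (ps.take i) := by
  obtain ⟨hne, hlen, hmem, hlink, halt⟩ := h
  refine ⟨by simpa using hne, by simp only [List.length_take]; omega,
    fun C hC => hmem C (List.mem_of_mem_take hC), fun t ht => ?_, fun t ht => ?_⟩
  · simp only [List.length_take, lt_inf_iff] at ht
    simpa [ht.1, Nat.lt_add_one_iff.mpr ht.1.le] using hlink t ht.2
  · simp only [List.length_take, lt_inf_iff] at ht
    simpa [ht.1, Nat.lt_of_succ_lt ht.1] using halt t ht.2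

theorem append (h₁ : IsAltPath S Cs₁ ps₁) (h₂ : IsAltPath S Cs₂ ps₂)
    (hjoin : Cs₁.getLast? = Cs₂.head?)
    (hturn : ∀ p ∈ ps₁.getLast?, ∀ q ∈ ps₂.head?, q.1 ≠ p.2) :
    IsAltPath S (Cs₁ ++ Cs₂.tail) (ps₁ ++ ps₂) := by
  obtain ⟨hne₁, hlen₁, hmem₁, hlink₁, halt₁⟩ := h₁
  obtain ⟨hne₂, hlen₂, hmem₂, hlink₂, halt₂⟩ := h₂
  have hleft : ∀ i < Cs₁.length, (Cs₁ ++ Cs₂.tail)[i]? = Cs₁[i]? :=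
    fun i hi => List.getElem?_append_left hi
  have hright : ∀ k, (Cs₁ ++ Cs₂.tail)[ps₁.length + k]? = Cs₂[k]? := by
    rintro (_ | k)
    · rw [List.getElem?_append_left (by omega), ← List.head?_eq_getElem?, ← hjoin,
        List.getLast?_eq_getElem?]
      congr 1; omega
    · rw [List.getElem?_append_right (by omega), List.getElem?_tail]
      congr 1; omega
  refine ⟨by simp [hne₁], by simp only [List.length_append, List.length_tail]; omega, ?_,
    fun i hi => ?_, fun i hi => ?_⟩
  · intro C hC
    rcases List.mem_append.mp hC with hC | hC
    · exact hmem₁ C hC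
    · exact hmem₂ C (List.mem_of_mem_tail hC)
  · simp only [List.length_append, List.get_eq_getElem, List.getD_eq_getElem?_getD] at hi ⊢
    rcases lt_or_ge i ps₁.length with hi₁ | hi₁
    · simpa [List.getElem_append_left hi₁, hleft i (by omega), hleft (i + 1) (by omega)]
        using hlink₁ i hi₁
    · obtain ⟨k, rfl⟩ := Nat.exists_eq_add_of_le hi₁
      simpa [List.getElem_append_right, hright, ← Nat.add_assoc, ← hright (k + 1)]
        using hlink₂ k (by omega)
  · simp only [List.length_append, List.get_eq_getElem] at hi ⊢
    rcases lt_trichotomy (i + 1) ps₁.length with hi₁ | hi₁ | hi₁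
    · simpa [List.getElem_append_left hi₁, List.getElem_append_left (Nat.lt_of_succ_lt hi₁)]
        using halt₁ i hi₁
    · have hp : ps₁[i] ∈ ps₁.getLast? := by
        simp [List.getLast?_eq_getElem?, ← hi₁]
      have hq : ps₂[0]'(by omega) ∈ ps₂.head? := by simp [List.head?_eq_getElem?]
      simpa [List.getElem_append_left (show i < ps₁.length by omega),
        List.getElem_append_right, ← hi₁] using hturn _ hp _ hq
    · obtain ⟨k, rfl⟩ := Nat.exists_eq_add_of_le (Nat.le_of_lt_succ hi₁)
      rw [List.getElem_append_right (by omega), List.getElem_append_right (by omega)]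
      simpa [Nat.add_assoc] using halt₂ k (by omega)

theorem splice (h : IsAltPath S Cs ps) {i j : ℕ} (hij : i < j) (hj : j < ps.length)
    (heq : Cs[i]? = Cs[j]?)
    (hturn : ∀ hi : 0 < i, (ps[j]).1 ≠ (ps[i - 1]'(by omega)).2) :
    IsAltPath S (Cs.take (i + 1) ++ Cs.drop (j + 1)) (ps.take i ++ ps.drop j) := by
  have hjC : j < Cs.length := by have := h.length_add_one; omega
  have := (h.take i).append (h.drop hjC) ?_ ?_
  · simpa using this
  · simp [List.getLast?_take, heq, List.head?_drop, List.getElem?_eq_getElem hjC]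
  · intro p hp q hq
    simp only [List.getLast?_take, List.getElem?_eq_getElem (show i - 1 < ps.length by omega),
      Option.some_or, Option.mem_def] at hp
    simp only [List.head?_drop, List.getElem?_eq_getElem hj, Option.mem_def,
      Option.some_inj] at hq
    split_ifs at hp with hi
    cases hp
    subst hq
    exact hturn (Nat.pos_of_ne_zero hi)

theorem altPathFromTo_splice {C D : Clause α} (hp : IsAltPath S Cs ps)
    (hh : Cs.head? = some C) (hl : Cs.getLast? = some D) {i j : ℕ} (hij : i < j)
    (hj : j < ps.length) (heq : Cs[i]? = Cs[j]?)
    (hturn : ∀ hi : 0 < i, (ps[j]).1 ≠ (ps[i - 1]'(by omega)).2) :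
    AltPathFromTo S C D (Cs.length - (j - i)) := by
  have hlen := hp.length_add_one
  refine ⟨_, _, hp.splice hij hj heq hturn, ?_, ?_,
    by simp only [List.length_append, List.length_take, List.length_drop]; omega⟩
  · simp [List.head?_append, List.head?_take, hh]
  · simp [List.getLast?_append, List.getLast?_drop, show ¬Cs.length ≤ j + 1 by omega, hl]

end IsAltPath

section Shortest

variable {α : Type} [DecidableEq α]

structure IsShortestAltPath (S : Set (Clause α)) (C D : Clause α) (Cs : List (Clause α))
    (ps : List (Lit α × Lit α)) : Prop where
  isAltPath : IsAltPath S Cs ps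
  head : Cs.head? = some C
  last : Cs.getLast? = some D
  minimal : ∀ m < Cs.length, ¬AltPathFromTo S C D m

theorem exists_isShortestAltPath {S : Set (Clause α)} {C D : Clause α}
    (h : ∃ n, AltPathFromTo S C D n) : ∃ Cs ps, IsShortestAltPath S C D Cs ps := by
  classical
  obtain ⟨Cs, ps, hp, hh, hl, hlen⟩ := Nat.find_spec h
  exact ⟨Cs, ps, hp, hh, hl, hlen ▸ fun m => Nat.find_min h⟩

namespace IsShortestAltPath

variable {S : Set (Clause α)} {C D : Clause α} {Cs : List (Clause α)}
  {ps : List (Lit α × Lit α)}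

theorem getElem?_ne_head (h : IsShortestAltPath S C D Cs ps) {a : ℕ} (ha : 0 < a) :
    Cs[a]? ≠ some C := by
  intro hCa
  have haC : a < Cs.length := (List.getElem?_eq_some_iff.mp hCa).1
  refine h.minimal (Cs.length - a) (by omega)
    ⟨Cs.drop a, ps.drop a, h.isAltPath.drop haC, by simpa [List.head?_drop], ?_, by simp⟩
  rw [List.getLast?_drop, if_neg (by omega)]
  exact h.last

theorem getElem?_ne_last (h : IsShortestAltPath S C D Cs ps) {a : ℕ}
    (ha : a + 1 < Cs.length) : Cs[a]? ≠ some D := by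
  intro hDa
  refine h.minimal (a + 1) ha
    ⟨Cs.take (a + 1), ps.take a, h.isAltPath.take a, ?_, ?_,
      by simp only [List.length_take]; omega⟩
  · simpa [List.head?_take] using h.head
  · simpa [List.getLast?_take, List.getElem?_eq_getElem (Nat.lt_of_succ_lt ha)] using hDa

theorem not_getElem?_eq_three (h : IsShortestAltPath S C D Cs ps) {a b c : ℕ} (ha : 0 < a)
    (hab : a < b) (hbc : b < c) (hc : c + 1 < Cs.length) (E : Clause α) :
    ¬(Cs[a]? = some E ∧ Cs[b]? = some E ∧ Cs[c]? = some E) := by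
  rintro ⟨hEa, hEb, hEc⟩
  have hlen := h.isAltPath.length_add_one
  have hsplice : ∀ {i j : ℕ} (hi : 0 < i) (hij : i < j) (hj : j < ps.length),
      Cs[i]? = Cs[j]? → (ps[j]).1 ≠ (ps[i - 1]'(by omega)).2 → False :=
    fun hi hij hj heq hturn => h.minimal _ (by omega)
      (h.isAltPath.altPathFromTo_splice h.head h.last hij hj heq fun _ => hturn)
  have hA : (ps[b]'(by omega)).1 = (ps[a - 1]'(by omega)).2 :=
    by_contra (hsplice ha hab (by omega) (hEa.trans hEb.symm))
  have hB : (ps[c]'(by omega)).1 = (ps[a - 1]'(by omega)).2 :=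
    by_contra (hsplice ha (hab.trans hbc) (by omega) (hEa.trans hEc.symm))
  obtain ⟨b, rfl⟩ : ∃ b', b = b' + 1 := ⟨b - 1, by omega⟩
  refine hsplice (by omega) hbc (by omega) (hEb.trans hEc.symm) ?_
  rw [hB, ← hA]
  simpa using h.isAltPath.fst_ne_snd (i := b) (by omega)

theorem count_head (h : IsShortestAltPath S C D Cs ps) : Cs.count C = 1 := by
  refine le_antisymm ?_ (List.count_pos_iff.mpr (List.mem_of_mem_head? h.head))
  by_contra! hcount
  obtain ⟨f, hf, hfC⟩ := List.exists_strictMono_getElem?_eq_of_le_count hcount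
  exact h.getElem?_ne_head ((Nat.zero_le _).trans_lt (hf Fin.zero_lt_one)) (hfC 1)

theorem count_last (h : IsShortestAltPath S C D Cs ps) : Cs.count D = 1 := by
  refine le_antisymm ?_ (List.count_pos_iff.mpr (List.mem_of_getLast? h.last))
  by_contra! hcount
  obtain ⟨f, hf, hfD⟩ := List.exists_strictMono_getElem?_eq_of_le_count hcount
  have h1 : f 1 < Cs.length := (List.getElem?_eq_some_iff.mp (hfD 1)).1
  exact h.getElem?_ne_last (by have := hf Fin.zero_lt_one; omega) (hfD 0)

theorem count_le_two (h : IsShortestAltPath S C D Cs ps) (E : Clause α) : Cs.count E ≤ 2 := by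
  by_contra! hcount
  obtain ⟨f, hf, hfE⟩ := List.exists_strictMono_getElem?_eq_of_le_count hcount
  have h01 : f 0 < f 1 := hf (by decide)
  have h12 : f 1 < f 2 := hf (by decide)
  have hlen2 : f 2 < Cs.length := (List.getElem?_eq_some_iff.mp (hfE 2)).1
  have h0 : 0 < f 0 := by
    refine Nat.pos_of_ne_zero fun h0 => h.getElem?_ne_head (a := f 1) (by omega) ?_
    rw [hfE 1, ← hfE 0, h0, ← List.head?_eq_getElem?, h.head]
  have hinner : f 2 + 1 < Cs.length := by
    refine lt_of_le_of_ne hlen2 fun hlast => h.getElem?_ne_last (a := f 1) (by omega) ?_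
    rw [hfE 1, ← hfE 2, ← h.last, List.getLast?_eq_getElem?]
    congr 1; omega
  exact h.not_getElem?_eq_three h0 h01 h12 hinner E ⟨hfE 0, hfE 1, hfE 2⟩

end IsShortestAltPath

end Shortest

/-- If there is an alternating path in `S` from `C` to `D`, then there is one in
which every clause occurs at most twice and the endpoints `C` and `D` each occur
exactly once. -/
theorem stmt_1 {α : Type} [DecidableEq α] (S : Set (Clause α)) (C D : Clause α)
    (h : ∃ Cs ps, IsAltPath S Cs ps ∧ Cs.head? = some C ∧ Cs.getLast? = some D) :
    ∃ Cs ps, IsAltPath S Cs ps ∧ Cs.head? = some C ∧ Cs.getLast? = some D ∧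
      (∀ E : Clause α, Cs.count E ≤ 2) ∧ Cs.count C = 1 ∧ Cs.count D = 1 := by
  obtain ⟨Cs, ps, hp, hh, hl⟩ := h
  obtain ⟨Cs', ps', hs⟩ := exists_isShortestAltPath ⟨_, Cs, ps, hp, hh, hl, rfl⟩
  exact ⟨Cs', ps', hs.isAltPath, hs.head, hs.last, hs.count_le_two, hs.count_head,
    hs.count_last⟩
end

section
/- If S is a minimal unsatisfiable set of propositional clauses, then S is relevance connected. -/
/-!
Since resolution is sound and, by compactness, refutationally complete, a minimal unsatisfiable
set `S` has a resolution refutation whose leaves are exactly the clauses of `S`. The leaves of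
any resolution tree are pairwise joined by alternating paths: when two subtrees are resolved on
`L` and `L.compl`, a path is glued across the two subtrees through a clause containing `L` and a
clause containing `L.compl`. To keep the alternation condition at the glueing points, one carries
along the induction the stronger invariant `Linked`.
-/

variable {α : Type}

theorem Lit.compl_compl (L : Lit α) : L.compl.compl = L := by
  cases L with | mk a s => simp [Lit.compl]

theorem Lit.fst_ne_of_ne {K : Lit α} {a : α} {b : Bool} (h₁ : K ≠ (a, b)) (h₂ : K ≠ (a, !b)) :
    K.1 ≠ a := by
  obtain ⟨k, s⟩ := K
  rintro rfl
  cases s <;> cases b <;> simp_all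

theorem exists_finite_not_satisfiable {S : Set (Clause α)} (hS : ¬ Satisfiable S) :
    ∃ T ⊆ S, T.Finite ∧ ¬ Satisfiable T := by
  have hclosed : ∀ C : S, IsClosed {v : α → Bool | SatClause v C} := fun C => by
    have : {v : α → Bool | SatClause v C} = ⋃ K ∈ (C : Clause α), {v | v K.1 = K.2} := by
      ext v; simp [SatClause, SatLit]
    rw [this]
    exact isClosed_biUnion_finset fun K _ => isClosed_eq (continuous_apply K.1) continuous_const
  obtain ⟨u, hu⟩ := isCompact_univ.elim_finite_subfamily_closed _ hclosed <| by
    refine Set.eq_empty_of_forall_notMem fun v hv => hS ⟨v, fun C hC => ?_⟩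
    exact Set.mem_iInter.1 hv.2 ⟨C, hC⟩
  refine ⟨Subtype.val '' (u : Set S), by simp, u.finite_toSet.image _, fun ⟨v, hv⟩ => ?_⟩
  refine (Set.eq_empty_iff_forall_notMem.1 hu v) ⟨trivial, ?_⟩
  simp only [Set.mem_iInter]
  exact fun C hC => hv C ⟨C, hC, rfl⟩

section Resolution

variable [DecidableEq α]

/-- `Derives T R`: a resolution tree whose leaves are exactly the clauses of `T` derives `R`. -/
inductive Derives : Set (Clause α) → Clause α → Prop
  | leaf (C : Clause α) : Derives {C} C
  | res {T₁ T₂ : Set (Clause α)} {R₁ R₂ : Clause α} (L : Lit α) :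
      Derives T₁ R₁ → Derives T₂ R₂ → L ∈ R₁ → L.compl ∈ R₂ →
      Derives (T₁ ∪ T₂) (R₁.erase L ∪ R₂.erase L.compl)

theorem Derives.sound {T : Set (Clause α)} {R : Clause α} (h : Derives T R) {v : α → Bool}
    (hv : SatSet v T) : SatClause v R := by
  induction h with
  | leaf C => exact hv C rfl
  | res L _ _ _ _ ih₁ ih₂ =>
    obtain ⟨K₁, hK₁, hv₁⟩ := ih₁ fun C hC => hv C (Or.inl hC)
    obtain ⟨K₂, hK₂, hv₂⟩ := ih₂ fun C hC => hv C (Or.inr hC)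
    by_cases hL : K₁ = L
    · have hL' : K₂ ≠ L.compl := by
        rintro rfl
        subst hL
        simp_all [SatLit, Lit.compl]
      exact ⟨K₂, Finset.mem_union_right _ (Finset.mem_erase.2 ⟨hL', hK₂⟩), hv₂⟩
    · exact ⟨K₁, Finset.mem_union_left _ (Finset.mem_erase.2 ⟨hL, hK₁⟩), hv₁⟩

theorem Derives.lift {S T' : Set (Clause α)} {R' : Clause α} {ℓ : Lit α} (h : Derives T' R')
    (hT' : T' ⊆ (fun C => C.erase ℓ) '' S) :
    ∃ T ⊆ S, ∃ R, Derives T R ∧ R' ⊆ R ∧ R ⊆ insert ℓ R' := by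
  induction h with
  | leaf C' =>
    obtain ⟨C, hC, rfl⟩ := hT' rfl
    exact ⟨{C}, Set.singleton_subset_iff.2 hC, C, .leaf C, Finset.erase_subset _ _,
      Finset.insert_erase_subset _ _⟩
  | res L _ _ _ _ ih₁ ih₂ =>
    obtain ⟨T₁, hT₁, R₁, d₁, hlo₁, hhi₁⟩ := ih₁ (Set.subset_union_left.trans hT')
    obtain ⟨T₂, hT₂, R₂, d₂, hlo₂, hhi₂⟩ := ih₂ (Set.subset_union_right.trans hT')
    refine ⟨T₁ ∪ T₂, Set.union_subset hT₁ hT₂, _, .res L d₁ d₂ (hlo₁ ‹_›) (hlo₂ ‹_›),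
      Finset.union_subset_union (Finset.erase_subset_erase _ hlo₁)
        (Finset.erase_subset_erase _ hlo₂), fun K hK => ?_⟩
    have h₁ := @hhi₁ K
    have h₂ := @hhi₂ K
    simp only [Finset.mem_union, Finset.mem_erase, Finset.mem_insert] at hK h₁ h₂ ⊢
    tauto

/-- The clauses of `S` under the partial assignment `a ↦ b`. -/
def assign (S : Set (Clause α)) (a : α) (b : Bool) : Set (Clause α) :=
  (fun C => C.erase (a, !b)) '' {C ∈ S | (a, b) ∉ C}

theorem Satisfiable.of_assign {S : Set (Clause α)} {a : α} {b : Bool}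
    (h : Satisfiable (assign S a b)) : Satisfiable S := by
  obtain ⟨v, hv⟩ := h
  refine ⟨Function.update v a b, fun C hC => ?_⟩
  by_cases hab : (a, b) ∈ C
  · exact ⟨(a, b), hab, by simp [SatLit]⟩
  · obtain ⟨K, hK, hvK⟩ := hv _ ⟨C, ⟨hC, hab⟩, rfl⟩
    obtain ⟨hKb, hKC⟩ := Finset.mem_erase.1 hK
    have hKa : K.1 ≠ a := Lit.fst_ne_of_ne (fun h => hab (h ▸ hKC)) hKb
    exact ⟨K, hKC, by rwa [SatLit, Function.update_of_ne hKa]⟩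

theorem fst_mem_of_mem_assign {S : Set (Clause α)} {A : Finset α} {a : α} {b : Bool}
    (hA : ∀ C ∈ S, ∀ K ∈ C, K.1 ∈ insert a A) : ∀ C ∈ assign S a b, ∀ K ∈ C, K.1 ∈ A := by
  rintro _ ⟨C, ⟨hC, hab⟩, rfl⟩ K hK
  obtain ⟨hKb, hKC⟩ := Finset.mem_erase.1 hK
  exact (Finset.mem_insert.1 (hA C hC K hKC)).resolve_left
    (Lit.fst_ne_of_ne (fun h => hab (h ▸ hKC)) hKb)

theorem exists_derives_empty_of_atoms (A : Finset α) :
    ∀ S : Set (Clause α), (∀ C ∈ S, ∀ K ∈ C, K.1 ∈ A) → ¬ Satisfiable S →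
      ∃ T ⊆ S, Derives T ∅ := by
  induction A using Finset.induction_on with
  | empty =>
    intro S hA hS
    obtain ⟨C, hC⟩ : S.Nonempty := Set.nonempty_iff_ne_empty.2 fun h =>
      hS ⟨fun _ => true, by simp [h, SatSet]⟩
    obtain rfl : C = ∅ := Finset.eq_empty_of_forall_notMem fun K hK => by
      simpa using hA C hC K hK
    exact ⟨{∅}, Set.singleton_subset_iff.2 hC, .leaf ∅⟩
  | insert a A _ ih =>
    intro S hA hS
    have hunit : ∀ b, ∃ T ⊆ S, ∃ R, Derives T R ∧ R ⊆ {(a, !b)} := fun b => by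
      obtain ⟨T', hT', d'⟩ := ih (assign S a b) (fst_mem_of_mem_assign hA)
        fun h => hS (Satisfiable.of_assign h)
      obtain ⟨T, hT, R, d, -, hR⟩ := d'.lift (hT'.trans (Set.image_mono (Set.sep_subset _ _)))
      exact ⟨T, hT, R, d, hR⟩
    obtain ⟨T₁, hT₁, R₁, d₁, hR₁⟩ := hunit true
    obtain ⟨T₂, hT₂, R₂, d₂, hR₂⟩ := hunit false
    obtain rfl | rfl := Finset.subset_singleton_iff.1 hR₁
    · exact ⟨T₁, hT₁, d₁⟩
    obtain rfl | rfl := Finset.subset_singleton_iff.1 hR₂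
    · exact ⟨T₂, hT₂, d₂⟩
    refine ⟨T₂ ∪ T₁, Set.union_subset hT₂ hT₁, ?_⟩
    convert Derives.res (a, true) d₂ d₁ (Finset.mem_singleton_self _)
      (Finset.mem_singleton_self _) using 1
    simp [Lit.compl]

theorem exists_derives_empty {S : Set (Clause α)} (hS : ¬ Satisfiable S) :
    ∃ T ⊆ S, Derives T ∅ := by
  obtain ⟨T₀, hT₀S, hT₀, hT₀S'⟩ := exists_finite_not_satisfiable hS
  obtain ⟨T, hT, d⟩ := exists_derives_empty_of_atoms
    (hT₀.toFinset.biUnion fun C => C.image Prod.fst) T₀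
    (fun C hC K hK => Finset.mem_biUnion.2
      ⟨C, hT₀.mem_toFinset.2 hC, Finset.mem_image_of_mem _ hK⟩) hT₀S'
  exact ⟨T, hT.trans hT₀S, d⟩

theorem MinimalUnsat.derives_empty {S : Set (Clause α)} (h : MinimalUnsat S) :
    Derives S ∅ := by
  obtain ⟨T, hTS, hT⟩ := exists_derives_empty h.1
  obtain rfl : T = S := by
    by_contra hne
    obtain ⟨v, hv⟩ := h.2 T (hTS.ssubset_of_ne hne)
    simpa [SatClause] using hT.sound hv
  exact hT

end Resolution

section Paths

variable {S : Set (Clause α)}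

/-- `APath S C x m D`: an alternating path in `S` with at least two clauses from `C` to `D`,
leaving `C` through the literal `x` and entering `D` through the literal `m`. -/
inductive APath (S : Set (Clause α)) : Clause α → Lit α → Lit α → Clause α → Prop
  | link {C D : Clause α} {L : Lit α} : C ∈ S → D ∈ S → L ∈ C → L.compl ∈ D →
      APath S C L L.compl D
  | cons {C D F : Clause α} {L x m : Lit α} : C ∈ S → L ∈ C → L.compl ∈ D → x ≠ L.compl →
      APath S D x m F → APath S C L m F

namespace APath

variable {C D F : Clause α} {x m y m' : Lit α}

theorem trans (p : APath S C x m D) (q : APath S D y m' F) (hy : y ≠ m) : APath S C x m' F := by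
  induction p with
  | link hC _ hL hLD => exact cons hC hL hLD hy q
  | cons hC hL hLD hx _ ih => exact cons hC hL hLD hx (ih q hy)

theorem snoc (p : APath S C x m D) {L : Lit α} (hL : L ∈ D) (hLm : L ≠ m) (hF : F ∈ S)
    (hLF : L.compl ∈ F) : APath S C x L.compl F := by
  induction p with
  | link hC hD hL' hLD => exact cons hC hL' hLD hLm (link hD hF hL hLF)
  | cons hC hL' hLD hx _ ih => exact cons hC hL' hLD hx (ih hL hLm)

theorem reverse (p : APath S C x m D) : APath S D m x C := by
  induction p with
  | @link C D L hC hD hL hLD =>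
    simpa only [Lit.compl_compl] using link hD hC hLD (by rwa [Lit.compl_compl])
  | @cons C D F L x m hC hL hLD hx p ih =>
    simpa only [Lit.compl_compl] using ih.snoc hLD hx.symm hC (by rwa [Lit.compl_compl])

end APath

/-- `P` constrains the literal through which the path leaves `C`. -/
def Reaches (S : Set (Clause α)) (P : Lit α → Prop) (C : Clause α) (K : Lit α) : Prop :=
  ∃ G ∈ S, K ∈ G ∧ (G = C ∨ ∃ x m, APath S C x m G ∧ P x ∧ m ≠ K)

def Conn (S : Set (Clause α)) (E F : Clause α) : Prop :=
  E = F ∨ ∃ x m, APath S E x m F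

theorem Conn.symm {E F : Clause α} (h : Conn S E F) : Conn S F E := by
  rcases h with rfl | ⟨x, m, p⟩
  · exact .inl rfl
  · exact .inr ⟨m, x, p.reverse⟩

namespace Reaches

variable {P Q : Lit α → Prop} {C D G : Clause α} {K M N : Lit α}

theorem extend (r : Reaches S P C M) (hM : P M) (hD : D ∈ S) (hMN : M.compl = N) (hN : N ∈ D) :
    ∃ x, P x ∧ APath S C x N D := by
  subst hMN
  obtain ⟨G, hG, hMG, rfl | ⟨x, m, p, hx, hm⟩⟩ := r
  · exact ⟨M, hM, .link hG hD hMG hN⟩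
  · exact ⟨x, hx, p.snoc hMG hm.symm hD hN⟩

theorem trans (r : Reaches S P C M) (hM : P M) (hG : G ∈ S) (hMN : M.compl = N) (hN : N ∈ G)
    (r' : Reaches S (· ≠ N) G K) (hK : N ≠ K) : Reaches S P C K := by
  obtain ⟨x, hx, p⟩ := r.extend hM hG hMN hN
  obtain ⟨G', hG', hKG', rfl | ⟨y, m, q, hy, hm⟩⟩ := r'
  · exact ⟨G', hG', hKG', .inr ⟨x, N, p, hx, hK⟩⟩
  · exact ⟨G', hG', hKG', .inr ⟨x, m, p.trans q hy, hx, hm⟩⟩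

theorem conn (r : Reaches S P C M) (hM : P M) (r' : Reaches S Q D M.compl) : Conn S C D := by
  obtain ⟨G, hG, hMG, hc⟩ := r'
  obtain ⟨x, -, p⟩ := r.extend hM hG rfl hMG
  rcases hc with rfl | ⟨y, m, q, -, hm⟩
  · exact .inr ⟨x, _, p⟩
  · exact .inr ⟨x, y, p.trans q.reverse hm⟩

end Reaches

/-- The invariant of a resolution tree with leaves `T` deriving `R`: its leaves are pairwise
connected, every leaf reaches every literal of `R`, and any two literals `A`, `B` of `R` are
joined by a path that neither leaves through `A` nor enters through `B`. -/
structure Linked (S T : Set (Clause α)) (R : Clause α) : Prop where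
  conn : ∀ E ∈ T, ∀ F ∈ T, Conn S E F
  reaches : ∀ K ∈ R, ∀ E ∈ T, Reaches S (fun _ => True) E K
  port : ∀ A ∈ R, ∀ B ∈ R, ∃ G ∈ S, A ∈ G ∧ Reaches S (· ≠ A) G B

theorem Linked.singleton {C : Clause α} (hC : C ∈ S) : Linked S {C} C where
  conn := by rintro E rfl F rfl; exact .inl rfl
  reaches := by rintro K hK E rfl; exact ⟨E, hC, hK, .inl rfl⟩
  port A hA B hB := ⟨C, hC, hA, C, hC, hB, .inl rfl⟩

end Paths

section Connectivity

variable [DecidableEq α] {S : Set (Clause α)}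

theorem Linked.res {T₁ T₂ : Set (Clause α)} {R₁ R₂ : Clause α} {L : Lit α}
    (h₁ : Linked S T₁ R₁) (h₂ : Linked S T₂ R₂) (hL₁ : L ∈ R₁) (hL₂ : L.compl ∈ R₂) :
    Linked S (T₁ ∪ T₂) (R₁.erase L ∪ R₂.erase L.compl) where
  conn E hE F hF := by
    rcases hE with hE | hE <;> rcases hF with hF | hF
    · exact h₁.conn E hE F hF
    · exact (h₁.reaches L hL₁ E hE).conn trivial (h₂.reaches _ hL₂ F hF)
    · exact ((h₁.reaches L hL₁ F hF).conn trivial (h₂.reaches _ hL₂ E hE)).symm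
    · exact h₂.conn E hE F hF
  reaches K hK E hE := by
    simp only [Finset.mem_union, Finset.mem_erase] at hK
    rcases hK with ⟨hKL, hK⟩ | ⟨hKL, hK⟩ <;> rcases hE with hE | hE
    · exact h₁.reaches K hK E hE
    · obtain ⟨G, hG, hLG, r⟩ := h₁.port L hL₁ K hK
      exact (h₂.reaches _ hL₂ E hE).trans trivial hG (Lit.compl_compl L) hLG r (Ne.symm hKL)
    · obtain ⟨G, hG, hLG, r⟩ := h₂.port _ hL₂ K hK
      exact (h₁.reaches L hL₁ E hE).trans trivial hG rfl hLG r (Ne.symm hKL)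
    · exact h₂.reaches K hK E hE
  port A hA B hB := by
    simp only [Finset.mem_union, Finset.mem_erase] at hA hB
    rcases hA with ⟨hAL, hA⟩ | ⟨hAL, hA⟩ <;> rcases hB with ⟨hBL, hB⟩ | ⟨hBL, hB⟩
    · exact h₁.port A hA B hB
    · obtain ⟨G, hG, hAG, r⟩ := h₁.port A hA L hL₁
      obtain ⟨G', hG', hLG', r'⟩ := h₂.port _ hL₂ B hB
      exact ⟨G, hG, hAG, r.trans (Ne.symm hAL) hG' rfl hLG' r' (Ne.symm hBL)⟩
    · obtain ⟨G, hG, hAG, r⟩ := h₂.port A hA _ hL₂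
      obtain ⟨G', hG', hLG', r'⟩ := h₁.port L hL₁ B hB
      exact ⟨G, hG, hAG, r.trans (Ne.symm hAL) hG' (Lit.compl_compl L) hLG' r' (Ne.symm hBL)⟩
    · exact h₂.port A hA B hB

theorem Derives.linked {T : Set (Clause α)} {R : Clause α} (h : Derives T R) (hT : T ⊆ S) :
    Linked S T R := by
  induction h with
  | leaf C => exact .singleton (hT rfl)
  | res L _ _ hL₁ hL₂ ih₁ ih₂ =>
    exact (ih₁ (Set.subset_union_left.trans hT)).res (ih₂ (Set.subset_union_right.trans hT))
      hL₁ hL₂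

theorem isAltPath_singleton {C : Clause α} (hC : C ∈ S) : IsAltPath S [C] [] :=
  ⟨List.cons_ne_nil _ _, rfl, by simpa using hC, nofun, nofun⟩

theorem IsAltPath.cons {C D : Clause α} {Cs : List (Clause α)} {ps : List (Lit α × Lit α)}
    {L : Lit α} (h : IsAltPath S (D :: Cs) ps) (hC : C ∈ S) (hL : L ∈ C) (hLD : L.compl ∈ D)
    (halt : ∀ p ∈ ps.head?, p.1 ≠ L.compl) :
    IsAltPath S (C :: D :: Cs) ((L, L.compl) :: ps) := by
  obtain ⟨-, hlen, hmem, hlink, halt'⟩ := h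
  refine ⟨List.cons_ne_nil _ _, by simp [hlen], ?_, ?_, ?_⟩
  · simpa [hC] using hmem
  · rintro (_ | i) hi
    · exact ⟨hL, hLD, rfl⟩
    · exact hlink i (Nat.lt_of_succ_lt_succ hi)
  · rintro (_ | i) hi
    · cases ps with
      | nil => simp at hi
      | cons p ps => exact halt p rfl
    · exact halt' i (Nat.lt_of_succ_lt_succ hi)

theorem APath.exists_isAltPath {C D : Clause α} {x m : Lit α} (p : APath S C x m D) :
    ∃ Cs ps, IsAltPath S (C :: Cs) ((x, x.compl) :: ps) ∧ (C :: Cs).getLast? = some D := by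
  induction p with
  | link hC hD hL hLD =>
    exact ⟨[_], [], (isAltPath_singleton hD).cons hC hL hLD nofun, rfl⟩
  | cons hC hL hLD hx _ ih =>
    obtain ⟨Cs, ps, h, hlast⟩ := ih
    exact ⟨_, _, h.cons hC hL hLD (by simpa using hx), by rw [List.getLast?_cons_cons, hlast]⟩

theorem Conn.exists_altPathFromTo {E F : Clause α} (h : Conn S E F) (hE : E ∈ S) :
    ∃ n, AltPathFromTo S E F n := by
  rcases h with rfl | ⟨x, m, p⟩
  · exact ⟨1, [E], [], isAltPath_singleton hE, rfl, rfl, rfl⟩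
  · obtain ⟨Cs, ps, h, hlast⟩ := p.exists_isAltPath
    exact ⟨_, _, _, h, rfl, hlast, rfl⟩

end Connectivity

/-- A minimal unsatisfiable set of propositional clauses is relevance connected. -/
theorem stmt_2 {α : Type} [DecidableEq α] (S : Set (Clause α))
    (h : MinimalUnsat S) : RelevanceConnected S := by
  intro C hC D hD
  exact ((h.derives_empty.linked subset_rfl).conn C hC D hD).exists_altPathFromTo hC
end

section
/- Let S be a finite unsatisfiable set of propositional clauses with support set U, let m be the U support radius of S, let k be the number of U support neighborhood literals of S, and consider the procedure DPLL-Rel which, given a set Q of clauses together with the associated set of still-remaining literals of finite relevance distance from U (initially all literals occurring in clauses of S at finite relevance distance from U, recomputed at each call as those remaining literals that still occur in Q), returns unsat if the empty clause is in Q, returns sat if no remaining literals exist, and otherwise chooses (by any choice function) a literal L such that L or its complement is a remaining literal of minimal relevance distance from U, recursively calls itself on Q|L, and, if that call returns unsat, recursively calls itself on Q|¬L, returning the result. Then the total number of recursive calls made by DPLL-Rel started on S is at most 2^k. -/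
/-- `Q|L`: delete all clauses containing `L`, and remove `¬L` from the others. -/
def Restrict {α : Type} [DecidableEq α] (Q : Set (Clause α)) (L : Lit α) :
    Set (Clause α) :=
  {D | ∃ C ∈ Q, L ∉ C ∧ D = C.erase (Lit.compl L)}

/-- The relevance distance of a literal `L` from `U` (in `S`): the least `i` such
that `L` or its complement occurs in a clause `C ∈ S` with `d_S(U, C) = i`. -/
noncomputable def litDist {α : Type} [DecidableEq α] (S U : Set (Clause α))
    (L : Lit α) : ℕ∞ :=
  ⨅ C ∈ {C ∈ S | L ∈ C ∨ Lit.compl L ∈ C}, relDistFrom S U C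

/-- The still-remaining literals for the current clause set `Q`: literals of
finite relevance distance from `U` (in `S`) that still occur in `Q`. -/
def RemLits {α : Type} [DecidableEq α] (S U Q : Set (Clause α)) : Set (Lit α) :=
  {L | (∃ C ∈ Q, L ∈ C) ∧ litDist S U L ≠ ⊤}

/-- `L` is a legitimate choice of split literal for `Q`: `L` or its complement is
a remaining literal of minimal relevance distance from `U`. -/
def Pick {α : Type} [DecidableEq α] (S U Q : Set (Clause α)) (L : Lit α) : Prop :=
  (L ∈ RemLits S U Q ∨ Lit.compl L ∈ RemLits S U Q) ∧
  ∀ M ∈ RemLits S U Q, litDist S U L ≤ litDist S U M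

/-- `Run S U Q b N`: started on the clause set `Q`, the procedure `DPLL-Rel`
(with reference set `S` and support set `U`, for some choice function) returns
the result `b` (`false` = unsat, `true` = sat) and makes `N` calls in total. -/
inductive Run {α : Type} [DecidableEq α] (S U : Set (Clause α)) :
    Set (Clause α) → Bool → ℕ → Prop
  | unsat (Q : Set (Clause α)) : (∅ : Clause α) ∈ Q → Run S U Q false 1
  | sat (Q : Set (Clause α)) : (∅ : Clause α) ∉ Q → RemLits S U Q = ∅ →
      Run S U Q true 1
  | splitSat (Q : Set (Clause α)) (L : Lit α) (n : ℕ) :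
      (∅ : Clause α) ∉ Q → RemLits S U Q ≠ ∅ → Pick S U Q L →
      Run S U (Restrict Q L) true n → Run S U Q true (n + 1)
  | splitBoth (Q : Set (Clause α)) (L : Lit α) (b : Bool) (n m : ℕ) :
      (∅ : Clause α) ∉ Q → RemLits S U Q ≠ ∅ → Pick S U Q L →
      Run S U (Restrict Q L) false n → Run S U (Restrict Q (Lit.compl L)) b m →
      Run S U Q b (n + m + 1)

/-! Every literal chosen by `DPLL-Rel` lies within the `U` support radius `m`: the current clause
set always contains an unsatisfiable set of clauses built from literals at relevance distance
at most `m` (initially the support neighborhood `R_{m,S}(U)`, and restriction preserves this), so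
a remaining literal of minimal distance is at distance at most `m`. Splitting on a literal removes
its atom from the clause set, so the recursion tree has depth at most the number `a` of atoms of
neighborhood literals and at most `2^(a+1) - 1` nodes. Finally `a < k`: the neighborhood is
unsatisfiable, so (unless `S` contains the empty clause and the run stops at once) it contains a
complementary pair of literals. -/

namespace Lit

variable {α : Type}

@[simp]
lemma compl_compl_s13 (L : Lit α) : Lit.compl (Lit.compl L) = L := by
  simp [compl]

@[simp]
lemma fst_compl (L : Lit α) : (Lit.compl L).1 = L.1 := rfl

lemma compl_ne (L : Lit α) : Lit.compl L ≠ L := by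
  simp [compl, Prod.ext_iff]

lemma eq_of_fst_eq_of_ne_compl {M L : Lit α} (h1 : M.1 = L.1) (h2 : M ≠ Lit.compl L) :
    M = L := by
  obtain ⟨a, s⟩ := M
  obtain ⟨b, t⟩ := L
  cases s <;> cases t <;> simp_all [compl]

end Lit

section Satisfiability

variable {α : Type}

lemma Satisfiable.mono {T T' : Set (Clause α)} (h : T ⊆ T') (hT' : Satisfiable T') :
    Satisfiable T :=
  let ⟨v, hv⟩ := hT'
  ⟨v, fun C hC => hv C (h hC)⟩

lemma nonempty_of_not_satisfiable {T : Set (Clause α)} (h : ¬ Satisfiable T) : T.Nonempty :=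
  Set.nonempty_iff_ne_empty.2 fun hT => h ⟨fun _ => true, by simp [SatSet, hT]⟩

lemma exists_compl_mem_of_not_satisfiable {R : Set (Clause α)} (hR : (∅ : Clause α) ∉ R)
    (h : ¬ Satisfiable R) : ∃ L, (∃ C ∈ R, L ∈ C) ∧ ∃ C ∈ R, Lit.compl L ∈ C := by
  classical
  by_contra! hno
  refine h ⟨fun a => decide (∃ C ∈ R, (a, true) ∈ C), fun C hC => ?_⟩
  obtain ⟨⟨a, s⟩, hM⟩ := Finset.nonempty_iff_ne_empty.2 fun h => hR (h ▸ hC)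
  refine ⟨(a, s), hM, ?_⟩
  cases s
  · simpa [SatLit] using fun D hD haD => hno (a, true) ⟨D, hD, haD⟩ C hC hM
  · simpa [SatLit] using ⟨C, hC, hM⟩

end Satisfiability

section Restrict

variable {α : Type} [DecidableEq α]

lemma exists_superset_of_mem_restrict {Q : Set (Clause α)} {L : Lit α} {D : Clause α}
    (hD : D ∈ Restrict Q L) : ∃ C ∈ Q, D ⊆ C := by
  obtain ⟨C, hC, -, rfl⟩ := hD
  exact ⟨C, hC, Finset.erase_subset _ _⟩

lemma fst_ne_of_mem_restrict {Q : Set (Clause α)} {L M : Lit α} {D : Clause α}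
    (hD : D ∈ Restrict Q L) (hM : M ∈ D) : M.1 ≠ L.1 := by
  obtain ⟨C, -, hL, rfl⟩ := hD
  exact fun h => hL (Lit.eq_of_fst_eq_of_ne_compl h (Finset.ne_of_mem_erase hM) ▸
    Finset.mem_of_mem_erase hM)

/-- A valuation satisfying `T|L` satisfies `T` once it is set to make `L` true. -/
lemma not_satisfiable_restrict {T : Set (Clause α)} (h : ¬ Satisfiable T) (L : Lit α) :
    ¬ Satisfiable (Restrict T L) := by
  rintro ⟨v, hv⟩
  refine h ⟨Function.update v L.1 L.2, fun C hC => ?_⟩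
  by_cases hL : L ∈ C
  · exact ⟨L, hL, by simp [SatLit]⟩
  · have hD : C.erase (Lit.compl L) ∈ Restrict T L := ⟨C, hC, hL, rfl⟩
    obtain ⟨M, hM, hMv⟩ := hv _ hD
    refine ⟨M, Finset.mem_of_mem_erase hM, ?_⟩
    simpa [SatLit, Function.update_of_ne (fst_ne_of_mem_restrict hD hM)] using hMv

end Restrict

section Distance

variable {α : Type} [DecidableEq α] {S U : Set (Clause α)}

@[simp]
lemma litDist_compl (L : Lit α) : litDist S U (Lit.compl L) = litDist S U L := by
  simp only [litDist, Lit.compl_compl_s13, or_comm]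

lemma litDist_le_relDistFrom {C : Clause α} {L : Lit α} (hC : C ∈ S) (hL : L ∈ C) :
    litDist S U L ≤ relDistFrom S U C :=
  iInf₂_le C ⟨hC, Or.inl hL⟩

lemma exists_mem_relSet_of_litDist_le {L : Lit α} {m : ℕ} (h : litDist S U L ≤ m) :
    ∃ C ∈ RelSet m S U, L ∈ C ∨ Lit.compl L ∈ C := by
  rw [← ENat.lt_add_one_iff (ENat.natCast_ne_top m), litDist] at h
  simp only [iInf_lt_iff] at h
  obtain ⟨C, ⟨hCS, hLC⟩, hC⟩ := h
  exact ⟨C, ⟨hCS, (ENat.lt_add_one_iff (ENat.natCast_ne_top m)).1 hC⟩, hLC⟩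

def nearClauses (S U : Set (Clause α)) (m : ℕ) : Set (Clause α) :=
  {C | ∀ L ∈ C, litDist S U L ≤ m}

lemma relSet_subset_nearClauses (m : ℕ) : RelSet m S U ⊆ nearClauses S U m :=
  fun _ hC _ hL => (litDist_le_relDistFrom hC.1 hL).trans hC.2

lemma not_satisfiable_restrict_inter_nearClauses {Q : Set (Clause α)} {m : ℕ}
    (h : ¬ Satisfiable (Q ∩ nearClauses S U m)) (L : Lit α) :
    ¬ Satisfiable (Restrict Q L ∩ nearClauses S U m) := by
  refine fun hsat => not_satisfiable_restrict h L (hsat.mono ?_)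
  rintro D ⟨C, ⟨hCQ, hCnear⟩, hL, rfl⟩
  exact ⟨⟨C, hCQ, hL, rfl⟩, fun M hM => hCnear M (Finset.mem_of_mem_erase hM)⟩

lemma Pick.litDist_le {Q : Set (Clause α)} {L : Lit α} {m : ℕ} (hpick : Pick S U Q L)
    (hQ : (∅ : Clause α) ∉ Q) (h : ¬ Satisfiable (Q ∩ nearClauses S U m)) :
    litDist S U L ≤ m := by
  obtain ⟨C, hCQ, hCnear⟩ := nonempty_of_not_satisfiable h
  obtain ⟨M, hM⟩ := Finset.nonempty_iff_ne_empty.2 fun hC => hQ (hC ▸ hCQ)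
  have hMrem : M ∈ RemLits S U Q :=
    ⟨⟨C, hCQ, hM⟩, ne_top_of_le_ne_top (ENat.natCast_ne_top m) (hCnear M hM)⟩
  exact (hpick.2 M hMrem).trans (hCnear M hM)

end Distance

section Run

variable {α : Type} [DecidableEq α] {S U : Set (Clause α)}

def CoversNearAtoms (S U Q : Set (Clause α)) (m : ℕ) (F : Finset α) : Prop :=
  ∀ C ∈ Q, ∀ M ∈ C, litDist S U M ≤ m → M.1 ∈ F

lemma CoversNearAtoms.restrict {Q : Set (Clause α)} {m : ℕ} {F : Finset α}
    (hF : CoversNearAtoms S U Q m F) (L : Lit α) :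
    CoversNearAtoms S U (Restrict Q L) m (F.erase L.1) := by
  intro D hD M hM hMm
  obtain ⟨C, hCQ, hDC⟩ := exists_superset_of_mem_restrict hD
  exact Finset.mem_erase.2 ⟨fst_ne_of_mem_restrict hD hM, hF C hCQ M (hDC hM) hMm⟩

lemma Pick.fst_mem {Q : Set (Clause α)} {L : Lit α} {m : ℕ} {F : Finset α}
    (hpick : Pick S U Q L) (hL : litDist S U L ≤ m) (hF : CoversNearAtoms S U Q m F) :
    L.1 ∈ F := by
  rcases hpick.1 with ⟨⟨C, hCQ, hLC⟩, -⟩ | ⟨⟨C, hCQ, hLC⟩, -⟩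
  · exact hF C hCQ L hLC hL
  · exact hF C hCQ (Lit.compl L) hLC (by rwa [litDist_compl])

lemma Run.calls_eq_one {Q : Set (Clause α)} {b : Bool} {N : ℕ} (hrun : Run S U Q b N)
    (hQ : (∅ : Clause α) ∈ Q) : N = 1 := by
  cases hrun with
  | unsat => rfl
  | sat _ h => exact absurd hQ h
  | splitSat _ _ _ h => exact absurd hQ h
  | splitBoth _ _ _ _ _ h => exact absurd hQ h

theorem Run.calls_add_one_le {Q : Set (Clause α)} {b : Bool} {N : ℕ} (hrun : Run S U Q b N)
    {m : ℕ} (hQ : ¬ Satisfiable (Q ∩ nearClauses S U m)) {F : Finset α}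
    (hF : CoversNearAtoms S U Q m F) : N + 1 ≤ 2 ^ (F.card + 1) := by
  induction hrun generalizing F with
  | unsat | sat =>
    have := Nat.one_le_two_pow (n := F.card)
    rw [pow_succ]
    omega
  | splitSat Q L n hempty _ hpick _ ih =>
    have hLF := hpick.fst_mem (hpick.litDist_le hempty hQ) hF
    have hn := ih (not_satisfiable_restrict_inter_nearClauses hQ L) (hF.restrict L)
    rw [Finset.card_erase_add_one hLF] at hn
    have := Nat.one_le_two_pow (n := F.card)
    rw [pow_succ]
    omega
  | splitBoth Q L b n n' hempty _ hpick _ _ ih ih' =>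
    have hLF := hpick.fst_mem (hpick.litDist_le hempty hQ) hF
    have hn := ih (not_satisfiable_restrict_inter_nearClauses hQ L) (hF.restrict L)
    have hn' := ih' (not_satisfiable_restrict_inter_nearClauses hQ (Lit.compl L))
      (hF.restrict (Lit.compl L))
    rw [Lit.fst_compl, Finset.card_erase_add_one hLF] at hn'
    rw [Finset.card_erase_add_one hLF] at hn
    rw [pow_succ]
    omega

end Run

lemma ncard_image_fst_lt_of_compl_mem {α : Type} {K : Set (Lit α)} (hK : K.Finite) {L : Lit α}
    (hL : L ∈ K) (hL' : Lit.compl L ∈ K) : (Prod.fst '' K).ncard < K.ncard := by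
  refine (Set.ncard_image_le hK).lt_of_ne fun h => Lit.compl_ne L ?_
  exact (Set.ncard_image_iff hK).1 h hL' hL (Lit.fst_compl L)

theorem stmt_13_general {α : Type} [DecidableEq α] (S U : Set (Clause α))
    (hfin : S.Finite)
    (m k : ℕ) (hm : IsLeast {i : ℕ | ¬ Satisfiable (RelSet i S U)} m)
    (hk : k = {L : Lit α | ∃ C ∈ RelSet m S U, L ∈ C}.ncard)
    (b : Bool) (N : ℕ) (hrun : Run S U S b N) :
    N ≤ 2 ^ k := by
  by_cases hempty : (∅ : Clause α) ∈ S
  · rw [hrun.calls_eq_one hempty]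
    exact Nat.one_le_two_pow
  set K := {L : Lit α | ∃ C ∈ RelSet m S U, L ∈ C}
  have hKfin : K.Finite := (hfin.biUnion fun C _ => C.finite_toSet).subset
    fun L ⟨C, hC, hL⟩ => Set.mem_biUnion hC.1 hL
  have hnear : ¬ Satisfiable (S ∩ nearClauses S U m) := fun hsat =>
    hm.1 (hsat.mono (Set.subset_inter (fun _ hC => hC.1) (relSet_subset_nearClauses m)))
  have hcover : CoversNearAtoms S U S m (hKfin.image Prod.fst).toFinset := by
    intro C _ M _ hM
    obtain ⟨D, hD, hMD | hMD⟩ := exists_mem_relSet_of_litDist_le hM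
    · exact (hKfin.image _).mem_toFinset.2 ⟨M, ⟨D, hD, hMD⟩, rfl⟩
    · exact (hKfin.image _).mem_toFinset.2 ⟨Lit.compl M, ⟨D, hD, hMD⟩, rfl⟩
  obtain ⟨L, hL, hL'⟩ := exists_compl_mem_of_not_satisfiable (fun h => hempty h.1) hm.1
  have hatoms := ncard_image_fst_lt_of_compl_mem hKfin hL hL'
  have hcalls := hrun.calls_add_one_le hnear hcover
  rw [← Set.ncard_eq_toFinset_card _ (hKfin.image _)] at hcalls
  calc N ≤ 2 ^ ((Prod.fst '' K).ncard + 1) := by omega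
    _ ≤ 2 ^ k := Nat.pow_le_pow_right two_pos (by omega)

/-- If `S` is a finite unsatisfiable set of clauses with support set `U`, `m` is
the `U` support radius of `S`, and `k` is the number of `U` support neighborhood
literals of `S`, then any run of `DPLL-Rel` started on `S` makes at most `2^k`
calls in total. -/
theorem stmt_13 {α : Type} [DecidableEq α] (S U : Set (Clause α))
    (hfin : S.Finite) (hU : IsSupport S U) (hunsat : ¬ Satisfiable S)
    (m k : ℕ) (hm : IsLeast {i : ℕ | ¬ Satisfiable (RelSet i S U)} m)
    (hk : k = {L : Lit α | ∃ C ∈ RelSet m S U, L ∈ C}.ncard)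
    (b : Bool) (N : ℕ) (hrun : Run S U S b N) :
    N ≤ 2 ^ k :=
  stmt_13_general S U hfin m k hm hk b N hrun
end
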